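/- arXiv:0811.3402 — 13 statements merged into one kernel-verified Lean document; each statement's English description precedes it below -/
import Mathlib

section
/- Let X be a set and R a binary relation on X. Then there exists a total preorder S on X (i.e., a binary relation that is total, reflexive, and transitive) that extends R (R ⊆ S) and such that for all x, y ∈ X, if x S y and y S x then x R* y, where R* denotes the reflexive–transitive closure of R. -/
/-!
Quotient the preorder `R*` by its symmetric part to get a partial order, extend that to a linear
order (Szpilrajn), and pull the linear order back to `X`. Two points are then mutually related
exactly when their images coincide, i.e. when they are `R*`-equivalent.
-/

theorem Preorder.exists_total_preorder_extension (α : Type*) [Preorder α] :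
    ∃ S : α → α → Prop,
      (∀ x y, S x y ∨ S y x) ∧
      (∀ x, S x x) ∧
      (∀ x y z, S x y → S y z → S x z) ∧
      (∀ x y, x ≤ y → S x y) ∧
      (∀ x y, S x y → S y x → x ≤ y) := by
  let f : α → LinearExtension (Antisymmetrization α (· ≤ ·)) :=
    toLinearExtension ∘ toAntisymmetrization (· ≤ ·)
  have hf : Monotone f := toLinearExtension.monotone.comp toAntisymmetrization_mono
  refine ⟨fun x y => f x ≤ f y, fun x y => le_total _ _, fun x => le_rfl,
    fun x y z => le_trans, fun x y h => hf h, fun x y hxy hyx => ?_⟩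
  have hfxy : f x = f y := le_antisymm hxy hyx
  have hquot : toAntisymmetrization (· ≤ ·) x = toAntisymmetrization (· ≤ ·) y := hfxy
  exact toAntisymmetrization_le_toAntisymmetrization_iff.1 hquot.le

/-- There exists a total preorder `S` extending `R` such that mutual `S`-comparability
implies membership in the reflexive-transitive closure of `R`. -/
theorem total_preorder_extension {X : Type*} (R : X → X → Prop) :
    ∃ S : X → X → Prop,
      (∀ x y, S x y ∨ S y x) ∧
      (∀ x, S x x) ∧
      (∀ x y z, S x y → S y z → S x z) ∧
      (∀ x y, R x y → S x y) ∧
      (∀ x y, S x y → S y x → Relation.ReflTransGen R x y) := by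
  let _ : Preorder X :=
    { le := Relation.ReflTransGen R
      le_refl := fun _ => .refl
      le_trans := fun _ _ _ => .trans }
  obtain ⟨S, htotal, hrefl, htrans, hext, hsymm⟩ := Preorder.exists_total_preorder_extension X
  exact ⟨S, htotal, hrefl, htrans, fun x y h => hext x y (.single h), hsymm⟩
end

section
/- Let U be a set, 𝒴 a collection of subsets of U closed under finite unions and under set difference (X, Y ∈ 𝒴 implies X ∪ Y ∈ 𝒴 and X \ Y ∈ 𝒴), and f a function assigning to each X ∈ 𝒴 a subset f(X) ⊆ U satisfying (μ⊆). Then the following are equivalent: (i) f satisfies (μPR); (ii) f satisfies (μOR); (iii) f satisfies (μwOR). Moreover, if f satisfies (μ⊆) and (μwOR), then f(X ∪ Y) ⊆ f(X) ∪ f(Y) ∪ (X ∩ Y) for all X, Y ∈ 𝒴 with X ∪ Y ∈ 𝒴. -/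
/-! The equivalences form the cycle (μPR) ⟹ (μOR) ⟹ (μwOR) ⟹ (μPR). By (μ⊆) an element of
`f (X ∪ Y)` lies in `X` or in `Y`, and (μPR) then puts it in `f X` or `f Y`; (μOR) gives (μwOR)
since `f Y ⊆ Y`; and for `X ⊆ Y`, (μwOR) applied to `Y = X ∪ (Y \ X)` sends an element of
`f Y ∩ X`, which is not in `Y \ X`, into `f X`. The final inclusion is (μwOR) applied to
`X ∪ Y` in both orders. -/

namespace ChoiceFunction

variable {α : Type*} (𝒴 : Set (Set α)) (f : Set α → Set α)

def MuPR : Prop := ∀ X ∈ 𝒴, ∀ Y ∈ 𝒴, X ⊆ Y → f Y ∩ X ⊆ f X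

def MuOR : Prop := ∀ X ∈ 𝒴, ∀ Y ∈ 𝒴, X ∪ Y ∈ 𝒴 → f (X ∪ Y) ⊆ f X ∪ f Y

def MuWOR : Prop := ∀ X ∈ 𝒴, ∀ Y ∈ 𝒴, X ∪ Y ∈ 𝒴 → f (X ∪ Y) ⊆ f X ∪ Y

variable {𝒴 f}

theorem muOR_of_muPR (hSub : ∀ X ∈ 𝒴, f X ⊆ X) (hPR : MuPR 𝒴 f) : MuOR 𝒴 f := by
  intro X hX Y hY hXY z hz
  rcases hSub _ hXY hz with hzX | hzY
  · exact Or.inl (hPR X hX _ hXY Set.subset_union_left ⟨hz, hzX⟩)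
  · exact Or.inr (hPR Y hY _ hXY Set.subset_union_right ⟨hz, hzY⟩)

theorem muWOR_of_muOR (hSub : ∀ X ∈ 𝒴, f X ⊆ X) (hOR : MuOR 𝒴 f) : MuWOR 𝒴 f :=
  fun X hX Y hY hXY =>
    (hOR X hX Y hY hXY).trans (Set.union_subset_union_right _ (hSub Y hY))

theorem muPR_of_muWOR (hDiff : ∀ A ∈ 𝒴, ∀ B ∈ 𝒴, A \ B ∈ 𝒴) (hwOR : MuWOR 𝒴 f) :
    MuPR 𝒴 f := by
  intro X hX Y hY hXY z ⟨hzY, hzX⟩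
  have hY_eq : X ∪ (Y \ X) = Y := Set.union_sdiff_cancel hXY
  have hsplit := hwOR X hX (Y \ X) (hDiff Y hY X hX) (by rwa [hY_eq])
  rw [hY_eq] at hsplit
  exact (hsplit hzY).resolve_right fun hz => hz.2 hzX

theorem subset_union_inter_of_muWOR (hwOR : MuWOR 𝒴 f) {X Y : Set α} (hX : X ∈ 𝒴)
    (hY : Y ∈ 𝒴) (hXY : X ∪ Y ∈ 𝒴) : f (X ∪ Y) ⊆ f X ∪ f Y ∪ (X ∩ Y) := by
  intro z hz
  have hYX := hwOR Y hY X hX (Set.union_comm X Y ▸ hXY)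
  rw [Set.union_comm] at hYX
  rcases hwOR X hX Y hY hXY hz with hzfX | hzY
  · exact Or.inl (Or.inl hzfX)
  rcases hYX hz with hzfY | hzX
  · exact Or.inl (Or.inr hzfY)
  · exact Or.inr ⟨hzX, hzY⟩

end ChoiceFunction

open ChoiceFunction in
theorem muPR_muOR_muwOR_equiv_general {α : Type*} (𝒴 : Set (Set α)) (f : Set α → Set α)
    (hDiff : ∀ A ∈ 𝒴, ∀ B ∈ 𝒴, A \ B ∈ 𝒴)
    (hSub : ∀ X ∈ 𝒴, f X ⊆ X) :
    ((∀ X ∈ 𝒴, ∀ Y ∈ 𝒴, X ⊆ Y → f Y ∩ X ⊆ f X) ↔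
      (∀ X ∈ 𝒴, ∀ Y ∈ 𝒴, X ∪ Y ∈ 𝒴 → f (X ∪ Y) ⊆ f X ∪ f Y)) ∧
    ((∀ X ∈ 𝒴, ∀ Y ∈ 𝒴, X ⊆ Y → f Y ∩ X ⊆ f X) ↔
      (∀ X ∈ 𝒴, ∀ Y ∈ 𝒴, X ∪ Y ∈ 𝒴 → f (X ∪ Y) ⊆ f X ∪ Y)) ∧
    ((∀ X ∈ 𝒴, ∀ Y ∈ 𝒴, X ∪ Y ∈ 𝒴 → f (X ∪ Y) ⊆ f X ∪ Y) →
      ∀ X ∈ 𝒴, ∀ Y ∈ 𝒴, X ∪ Y ∈ 𝒴 → f (X ∪ Y) ⊆ f X ∪ f Y ∪ (X ∩ Y)) := by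
  have hPR_OR : MuPR 𝒴 f → MuOR 𝒴 f := muOR_of_muPR hSub
  have hOR_wOR : MuOR 𝒴 f → MuWOR 𝒴 f := muWOR_of_muOR hSub
  have hwOR_PR : MuWOR 𝒴 f → MuPR 𝒴 f := muPR_of_muWOR hDiff
  exact ⟨⟨hPR_OR, hwOR_PR ∘ hOR_wOR⟩, ⟨hOR_wOR ∘ hPR_OR, hwOR_PR⟩,
    fun hwOR X hX Y hY => subset_union_inter_of_muWOR hwOR hX hY⟩

/-- For `f` satisfying (μ⊆) on a domain closed under finite unions and set difference,
(μPR), (μOR) and (μwOR) are equivalent; moreover (μ⊆) + (μwOR) imply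
`f(X ∪ Y) ⊆ f(X) ∪ f(Y) ∪ (X ∩ Y)`. -/
theorem muPR_muOR_muwOR_equiv {α : Type*} (𝒴 : Set (Set α)) (f : Set α → Set α)
    (hUnion : ∀ A ∈ 𝒴, ∀ B ∈ 𝒴, A ∪ B ∈ 𝒴)
    (hDiff : ∀ A ∈ 𝒴, ∀ B ∈ 𝒴, A \ B ∈ 𝒴)
    (hSub : ∀ X ∈ 𝒴, f X ⊆ X) :
    ((∀ X ∈ 𝒴, ∀ Y ∈ 𝒴, X ⊆ Y → f Y ∩ X ⊆ f X) ↔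
      (∀ X ∈ 𝒴, ∀ Y ∈ 𝒴, X ∪ Y ∈ 𝒴 → f (X ∪ Y) ⊆ f X ∪ f Y)) ∧
    ((∀ X ∈ 𝒴, ∀ Y ∈ 𝒴, X ⊆ Y → f Y ∩ X ⊆ f X) ↔
      (∀ X ∈ 𝒴, ∀ Y ∈ 𝒴, X ∪ Y ∈ 𝒴 → f (X ∪ Y) ⊆ f X ∪ Y)) ∧
    ((∀ X ∈ 𝒴, ∀ Y ∈ 𝒴, X ∪ Y ∈ 𝒴 → f (X ∪ Y) ⊆ f X ∪ Y) →
      ∀ X ∈ 𝒴, ∀ Y ∈ 𝒴, X ∪ Y ∈ 𝒴 → f (X ∪ Y) ⊆ f X ∪ f Y ∪ (X ∩ Y)) :=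
  muPR_muOR_muwOR_equiv_general 𝒴 f hDiff hSub
end

section
/- Let U be a set, 𝒴 a collection of subsets of U closed under finite intersections (X, Y ∈ 𝒴 implies X ∩ Y ∈ 𝒴), and f a function assigning to each X ∈ 𝒴 a subset f(X) ⊆ U satisfying (μ⊆). Then f satisfies (μCUM) if and only if f satisfies (μ⊆⊇). -/
def MuCUM {α : Type*} (𝒴 : Set (Set α)) (f : Set α → Set α) : Prop :=
  ∀ X ∈ 𝒴, ∀ Y ∈ 𝒴, f X ⊆ Y → Y ⊆ X → f Y = f X

def MuSubSup {α : Type*} (𝒴 : Set (Set α)) (f : Set α → Set α) : Prop :=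
  ∀ X ∈ 𝒴, ∀ Y ∈ 𝒴, f X ⊆ Y → f Y ⊆ X → f X = f Y

section

variable {α : Type*} {𝒴 : Set (Set α)} {f : Set α → Set α}

theorem MuCUM.apply_inter_eq (hCUM : MuCUM 𝒴 f) (hSub : ∀ X ∈ 𝒴, f X ⊆ X)
    {X Y : Set α} (hX : X ∈ 𝒴) (hXY : X ∩ Y ∈ 𝒴) (hfXY : f X ⊆ Y) :
    f (X ∩ Y) = f X :=
  hCUM X hX (X ∩ Y) hXY (Set.subset_inter (hSub X hX) hfXY) Set.inter_subset_left

/-- Both `f X` and `f Y` equal `f (X ∩ Y)` by cumulativity. -/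
theorem MuCUM.muSubSup (hCUM : MuCUM 𝒴 f) (hInter : ∀ A ∈ 𝒴, ∀ B ∈ 𝒴, A ∩ B ∈ 𝒴)
    (hSub : ∀ X ∈ 𝒴, f X ⊆ X) : MuSubSup 𝒴 f := by
  intro X hX Y hY hfXY hfYX
  have hX_inter : f (X ∩ Y) = f X := hCUM.apply_inter_eq hSub hX (hInter X hX Y hY) hfXY
  have hY_inter : f (Y ∩ X) = f Y := hCUM.apply_inter_eq hSub hY (hInter Y hY X hX) hfYX
  rw [← hX_inter, ← hY_inter, Set.inter_comm]

theorem MuSubSup.muCUM (h : MuSubSup 𝒴 f) (hSub : ∀ X ∈ 𝒴, f X ⊆ X) : MuCUM 𝒴 f :=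
  fun X hX Y hY hfXY hYX => (h X hX Y hY hfXY ((hSub Y hY).trans hYX)).symm

end

/-- For `f` satisfying (μ⊆) on a domain closed under finite intersections,
(μCUM) holds iff (μ⊆⊇) holds. -/
theorem muCUM_iff_muSubSup {α : Type*} (𝒴 : Set (Set α)) (f : Set α → Set α)
    (hInter : ∀ A ∈ 𝒴, ∀ B ∈ 𝒴, A ∩ B ∈ 𝒴)
    (hSub : ∀ X ∈ 𝒴, f X ⊆ X) :
    (∀ X ∈ 𝒴, ∀ Y ∈ 𝒴, f X ⊆ Y → Y ⊆ X → f Y = f X) ↔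
    (∀ X ∈ 𝒴, ∀ Y ∈ 𝒴, f X ⊆ Y → f Y ⊆ X → f X = f Y) :=
  show MuCUM 𝒴 f ↔ MuSubSup 𝒴 f from
    ⟨fun hCUM => hCUM.muSubSup hInter hSub, fun h => h.muCUM hSub⟩
end

section
/- Let U be a set, 𝒴 a collection of subsets of U, and f a function assigning to each X ∈ 𝒴 a subset f(X) ⊆ U. Then: (a) f satisfies (μ=) if and only if f satisfies both (μPR) and (μRatM); (b) if moreover 𝒴 is closed under finite intersections and f satisfies (μ⊆), then f satisfies (μ=) if and only if f satisfies (μ='). -/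
open Set

section SelectionFunction

variable {α : Type*} (𝒴 : Set (Set α)) (f : Set α → Set α)

def MuPR : Prop := ∀ X ∈ 𝒴, ∀ Y ∈ 𝒴, X ⊆ Y → f Y ∩ X ⊆ f X

def MuRatM : Prop := ∀ X ∈ 𝒴, ∀ Y ∈ 𝒴, X ⊆ Y → (X ∩ f Y).Nonempty → f X ⊆ f Y ∩ X

def MuEq : Prop := ∀ X ∈ 𝒴, ∀ Y ∈ 𝒴, X ⊆ Y → (X ∩ f Y).Nonempty → f X = f Y ∩ X

def MuEq' : Prop := ∀ X ∈ 𝒴, ∀ Y ∈ 𝒴, X ∩ Y ∈ 𝒴 → (f Y ∩ X).Nonempty → f (Y ∩ X) = f Y ∩ X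

variable {𝒴 f}

theorem MuEq.muPR (h : MuEq 𝒴 f) : MuPR 𝒴 f := by
  intro X hX Y hY hXY a ha
  rw [h X hX Y hY hXY ⟨a, ha.2, ha.1⟩]
  exact ha

theorem MuEq.muRatM (h : MuEq 𝒴 f) : MuRatM 𝒴 f :=
  fun X hX Y hY hXY hne => (h X hX Y hY hXY hne).subset

theorem MuEq.of_muPR_of_muRatM (hPR : MuPR 𝒴 f) (hRatM : MuRatM 𝒴 f) : MuEq 𝒴 f :=
  fun X hX Y hY hXY hne => (hRatM X hX Y hY hXY hne).antisymm (hPR X hX Y hY hXY)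

theorem muEq_iff_muPR_and_muRatM : MuEq 𝒴 f ↔ MuPR 𝒴 f ∧ MuRatM 𝒴 f :=
  ⟨fun h => ⟨h.muPR, h.muRatM⟩, fun h => .of_muPR_of_muRatM h.1 h.2⟩

theorem MuEq.muEq' (hsub : ∀ X ∈ 𝒴, f X ⊆ X) (h : MuEq 𝒴 f) : MuEq' 𝒴 f := by
  intro X _ Y hY hXY ⟨a, haf, haX⟩
  have hfY : f Y ∩ (Y ∩ X) = f Y ∩ X := by
    rw [← inter_assoc, inter_eq_left.mpr (hsub Y hY)]
  rw [h (Y ∩ X) (inter_comm X Y ▸ hXY) Y hY inter_subset_left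
    ⟨a, ⟨hsub Y hY haf, haX⟩, haf⟩, hfY]

theorem MuEq.of_muEq' (hinter : ∀ A ∈ 𝒴, ∀ B ∈ 𝒴, A ∩ B ∈ 𝒴) (h : MuEq' 𝒴 f) : MuEq 𝒴 f := by
  intro X hX Y hY hXY ⟨a, haX, haf⟩
  simpa only [inter_eq_right.mpr hXY] using
    h X hX Y hY (hinter X hX Y hY) ⟨a, haf, haX⟩

end SelectionFunction

/-- (a) (μ=) is equivalent to (μPR) together with (μRatM);
(b) given closure under finite intersections and (μ⊆), (μ=) is equivalent to (μ='). -/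
theorem muEq_characterizations {α : Type*} (𝒴 : Set (Set α)) (f : Set α → Set α) :
    ((∀ X ∈ 𝒴, ∀ Y ∈ 𝒴, X ⊆ Y → (X ∩ f Y).Nonempty → f X = f Y ∩ X) ↔
      ((∀ X ∈ 𝒴, ∀ Y ∈ 𝒴, X ⊆ Y → f Y ∩ X ⊆ f X) ∧
       (∀ X ∈ 𝒴, ∀ Y ∈ 𝒴, X ⊆ Y → (X ∩ f Y).Nonempty → f X ⊆ f Y ∩ X))) ∧
    ((∀ A ∈ 𝒴, ∀ B ∈ 𝒴, A ∩ B ∈ 𝒴) → (∀ X ∈ 𝒴, f X ⊆ X) →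
      ((∀ X ∈ 𝒴, ∀ Y ∈ 𝒴, X ⊆ Y → (X ∩ f Y).Nonempty → f X = f Y ∩ X) ↔
       (∀ X ∈ 𝒴, ∀ Y ∈ 𝒴, X ∩ Y ∈ 𝒴 → (f Y ∩ X).Nonempty → f (Y ∩ X) = f Y ∩ X))) :=
  ⟨muEq_iff_muPR_and_muRatM, fun hinter hsub => ⟨MuEq.muEq' hsub, MuEq.of_muEq' hinter⟩⟩
end

section
/- Let U be a set, 𝒴 a collection of subsets of U closed under finite unions, and f a function assigning to each X ∈ 𝒴 a subset f(X) ⊆ U satisfying (μ⊆), (μ∅), and (μ=). Then f satisfies (μ∪), (μ∪'), (μ‖), and (μCUM). -/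
/-!
Everything follows from cumulativity: if `f X ⊆ Y ⊆ X` then `Y` meets `f X`, so (μ=) gives
`f Y = f X ∩ Y = f X` (and if `f X = ∅` then `X = ∅` by (μ∅)). Hence whenever `f (X ∪ Y)` misses
`Y`, it lies in `X ⊆ X ∪ Y` and equals `f X`. For (μ∪), a point of `f Y ∩ (X \ f X)` would, by
(μ=) applied twice, lie in `f (X ∪ Y)` and then in `f X` as soon as `f (X ∪ Y)` meets `Y`.
For (μ‖), if `f (X ∪ Y)` meets both `X` and `Y`, then (μ=) cuts it into `f X ∪ f Y`.
-/

open Set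

namespace ChoiceFunction

variable {α : Type*} {𝒴 : Set (Set α)} {f : Set α → Set α} {X Y : Set α}

def MuSub (𝒴 : Set (Set α)) (f : Set α → Set α) : Prop :=
  ∀ X ∈ 𝒴, f X ⊆ X

def MuEmpty (𝒴 : Set (Set α)) (f : Set α → Set α) : Prop :=
  ∀ X ∈ 𝒴, f X = ∅ → X = ∅

def MuEq (𝒴 : Set (Set α)) (f : Set α → Set α) : Prop :=
  ∀ X ∈ 𝒴, ∀ Y ∈ 𝒴, X ⊆ Y → (X ∩ f Y).Nonempty → f X = f Y ∩ X

theorem eq_of_subset_of_subset (hSub : MuSub 𝒴 f) (hEmpty : MuEmpty 𝒴 f) (hEq : MuEq 𝒴 f)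
    (hX : X ∈ 𝒴) (hY : Y ∈ 𝒴) (hfXY : f X ⊆ Y) (hYX : Y ⊆ X) : f Y = f X := by
  rcases (f X).eq_empty_or_nonempty with hfX | ⟨a, ha⟩
  · have hY_empty : Y = ∅ := subset_eq_empty hYX (hEmpty X hX hfX)
    rw [hfX, ← subset_empty_iff]
    exact hY_empty ▸ hSub Y hY
  · rw [hEq Y hY X hX hYX ⟨a, hfXY ha, ha⟩, inter_eq_left.2 hfXY]

theorem union_eq_left_of_inter_right_eq_empty (hSub : MuSub 𝒴 f) (hEmpty : MuEmpty 𝒴 f)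
    (hEq : MuEq 𝒴 f) (hX : X ∈ 𝒴) (hXY : X ∪ Y ∈ 𝒴) (h : f (X ∪ Y) ∩ Y = ∅) :
    f (X ∪ Y) = f X :=
  have hfX : f (X ∪ Y) ⊆ X :=
    Disjoint.subset_left_of_subset_union (hSub _ hXY) (disjoint_iff_inter_eq_empty.2 h)
  (eq_of_subset_of_subset hSub hEmpty hEq hXY hX hfX subset_union_left).symm

theorem union_eq_right_of_inter_left_eq_empty (hSub : MuSub 𝒴 f) (hEmpty : MuEmpty 𝒴 f)
    (hEq : MuEq 𝒴 f) (hY : Y ∈ 𝒴) (hXY : X ∪ Y ∈ 𝒴) (h : f (X ∪ Y) ∩ X = ∅) :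
    f (X ∪ Y) = f Y := by
  rw [union_comm] at hXY h ⊢
  exact union_eq_left_of_inter_right_eq_empty hSub hEmpty hEq hY hXY h

theorem union_inter_right_eq_empty (hEq : MuEq 𝒴 f) (hX : X ∈ 𝒴) (hY : Y ∈ 𝒴)
    (hXY : X ∪ Y ∈ 𝒴) (h : (f Y ∩ (X \ f X)).Nonempty) : f (X ∪ Y) ∩ Y = ∅ := by
  obtain ⟨a, haY, haX, ha_not⟩ := h
  refine eq_empty_of_forall_notMem fun b hb => ha_not ?_
  have hfY : f Y = f (X ∪ Y) ∩ Y :=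
    hEq Y hY _ hXY subset_union_right ⟨b, hb.2, hb.1⟩
  have ha : a ∈ f (X ∪ Y) := (hfY ▸ haY).1
  rw [hEq X hX _ hXY subset_union_left ⟨a, haX, ha⟩]
  exact ⟨ha, haX⟩

theorem union_eq_left (hSub : MuSub 𝒴 f) (hEmpty : MuEmpty 𝒴 f) (hEq : MuEq 𝒴 f)
    (hX : X ∈ 𝒴) (hY : Y ∈ 𝒴) (hXY : X ∪ Y ∈ 𝒴) (h : (f Y ∩ (X \ f X)).Nonempty) :
    f (X ∪ Y) = f X :=
  union_eq_left_of_inter_right_eq_empty hSub hEmpty hEq hX hXY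
    (union_inter_right_eq_empty hEq hX hY hXY h)

theorem union_trichotomy (hSub : MuSub 𝒴 f) (hEmpty : MuEmpty 𝒴 f) (hEq : MuEq 𝒴 f)
    (hX : X ∈ 𝒴) (hY : Y ∈ 𝒴) (hXY : X ∪ Y ∈ 𝒴) :
    f (X ∪ Y) = f X ∨ f (X ∪ Y) = f Y ∨ f (X ∪ Y) = f X ∪ f Y := by
  rcases (f (X ∪ Y) ∩ Y).eq_empty_or_nonempty with hfY | ⟨b, hbY⟩
  · exact .inl (union_eq_left_of_inter_right_eq_empty hSub hEmpty hEq hX hXY hfY)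
  rcases (f (X ∪ Y) ∩ X).eq_empty_or_nonempty with hfX | ⟨a, haX⟩
  · exact .inr (.inl (union_eq_right_of_inter_left_eq_empty hSub hEmpty hEq hY hXY hfX))
  refine .inr (.inr ?_)
  rw [hEq X hX _ hXY subset_union_left ⟨a, haX.2, haX.1⟩,
    hEq Y hY _ hXY subset_union_right ⟨b, hbY.2, hbY.1⟩,
    ← inter_union_distrib_left, inter_eq_left.2 (hSub _ hXY)]

end ChoiceFunction

open ChoiceFunction in
theorem muSub_muEmpty_muEq_consequences_general {α : Type*} (𝒴 : Set (Set α)) (f : Set α → Set α)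
    (hSub : ∀ X ∈ 𝒴, f X ⊆ X)
    (hEmpty : ∀ X ∈ 𝒴, f X = ∅ → X = ∅)
    (hEq : ∀ X ∈ 𝒴, ∀ Y ∈ 𝒴, X ⊆ Y → (X ∩ f Y).Nonempty → f X = f Y ∩ X) :
    (∀ X ∈ 𝒴, ∀ Y ∈ 𝒴, X ∪ Y ∈ 𝒴 →
       (f Y ∩ (X \ f X)).Nonempty → f (X ∪ Y) ∩ Y = ∅) ∧
    (∀ X ∈ 𝒴, ∀ Y ∈ 𝒴, X ∪ Y ∈ 𝒴 →
       (f Y ∩ (X \ f X)).Nonempty → f (X ∪ Y) = f X) ∧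
    (∀ X ∈ 𝒴, ∀ Y ∈ 𝒴, X ∪ Y ∈ 𝒴 →
       f (X ∪ Y) = f X ∨ f (X ∪ Y) = f Y ∨ f (X ∪ Y) = f X ∪ f Y) ∧
    (∀ X ∈ 𝒴, ∀ Y ∈ 𝒴, f X ⊆ Y → Y ⊆ X → f Y = f X) :=
  ⟨fun _ hX _ hY hXY h => union_inter_right_eq_empty hEq hX hY hXY h,
    fun _ hX _ hY hXY h => union_eq_left hSub hEmpty hEq hX hY hXY h,
    fun _ hX _ hY hXY => union_trichotomy hSub hEmpty hEq hX hY hXY,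
    fun _ hX _ hY => eq_of_subset_of_subset hSub hEmpty hEq hX hY⟩

/-- (μ⊆), (μ∅), (μ=) on a domain closed under finite unions imply
(μ∪), (μ∪'), (μ‖) and (μCUM). -/
theorem muSub_muEmpty_muEq_consequences {α : Type*} (𝒴 : Set (Set α)) (f : Set α → Set α)
    (hUnion : ∀ A ∈ 𝒴, ∀ B ∈ 𝒴, A ∪ B ∈ 𝒴)
    (hSub : ∀ X ∈ 𝒴, f X ⊆ X)
    (hEmpty : ∀ X ∈ 𝒴, f X = ∅ → X = ∅)
    (hEq : ∀ X ∈ 𝒴, ∀ Y ∈ 𝒴, X ⊆ Y → (X ∩ f Y).Nonempty → f X = f Y ∩ X) :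
    (∀ X ∈ 𝒴, ∀ Y ∈ 𝒴, X ∪ Y ∈ 𝒴 →
       (f Y ∩ (X \ f X)).Nonempty → f (X ∪ Y) ∩ Y = ∅) ∧
    (∀ X ∈ 𝒴, ∀ Y ∈ 𝒴, X ∪ Y ∈ 𝒴 →
       (f Y ∩ (X \ f X)).Nonempty → f (X ∪ Y) = f X) ∧
    (∀ X ∈ 𝒴, ∀ Y ∈ 𝒴, X ∪ Y ∈ 𝒴 →
       f (X ∪ Y) = f X ∨ f (X ∪ Y) = f Y ∨ f (X ∪ Y) = f X ∪ f Y) ∧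
    (∀ X ∈ 𝒴, ∀ Y ∈ 𝒴, f X ⊆ Y → Y ⊆ X → f Y = f X) :=
  muSub_muEmpty_muEq_consequences_general 𝒴 f hSub hEmpty hEq
end

section
/- Let U be a set, 𝒴 a collection of subsets of U, and f a function assigning to each X ∈ 𝒴 a subset f(X) ⊆ U satisfying (μ⊆), (μCUM), and (μ=). Then: (a) if 𝒴 is closed under finite unions, f satisfies (μ‖); (b) if 𝒴 is closed under finite unions and contains all singletons {a} for a ∈ U, then f satisfies (μ∈). -/
/-!
For (μ‖), look at which of `X`, `Y` meet `f (X ∪ Y)`: if both do, (μ=) computes `f X` and `f Y` as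
the traces of `f (X ∪ Y)`; if, say, `Y` does not, then `f (X ∪ Y) ⊆ X` and (μCUM) gives
`f X = f (X ∪ Y)`. For (μ∈), take `b ∈ f X`, so that (μ=) gives `f {a, b} = f X ∩ {a, b}`, which
misses `a`; if `f X` is empty, (μCUM) gives `f {a} = f X = ∅` and `b = a` works.
-/

namespace Choice

variable {α : Type*}

def MuSubset (𝒴 : Set (Set α)) (f : Set α → Set α) : Prop :=
  ∀ X ∈ 𝒴, f X ⊆ X

def MuCum (𝒴 : Set (Set α)) (f : Set α → Set α) : Prop :=
  ∀ X ∈ 𝒴, ∀ Y ∈ 𝒴, f X ⊆ Y → Y ⊆ X → f Y = f X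

def MuEq (𝒴 : Set (Set α)) (f : Set α → Set α) : Prop :=
  ∀ X ∈ 𝒴, ∀ Y ∈ 𝒴, X ⊆ Y → (X ∩ f Y).Nonempty → f X = f Y ∩ X

variable {𝒴 : Set (Set α)} {f : Set α → Set α}

theorem apply_union_eq_left_of_not_inter_nonempty (hSub : MuSubset 𝒴 f) (hCum : MuCum 𝒴 f)
    {X Y : Set α} (hX : X ∈ 𝒴) (hXY : X ∪ Y ∈ 𝒴) (hY : ¬(Y ∩ f (X ∪ Y)).Nonempty) :
    f (X ∪ Y) = f X := by
  have hfX : f (X ∪ Y) ⊆ X := fun z hz =>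
    (hSub _ hXY hz).resolve_right fun hzY => hY ⟨z, hzY, hz⟩
  exact (hCum _ hXY X hX hfX Set.subset_union_left).symm

theorem apply_union_eq_union_of_inter_nonempty (hSub : MuSubset 𝒴 f) (hEq : MuEq 𝒴 f)
    {X Y : Set α} (hX : X ∈ 𝒴) (hY : Y ∈ 𝒴) (hXY : X ∪ Y ∈ 𝒴)
    (hXf : (X ∩ f (X ∪ Y)).Nonempty) (hYf : (Y ∩ f (X ∪ Y)).Nonempty) :
    f (X ∪ Y) = f X ∪ f Y := by
  rw [hEq X hX _ hXY Set.subset_union_left hXf, hEq Y hY _ hXY Set.subset_union_right hYf,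
    ← Set.inter_union_distrib_left, Set.inter_eq_self_of_subset_left (hSub _ hXY)]

theorem muPar (hSub : MuSubset 𝒴 f) (hCum : MuCum 𝒴 f) (hEq : MuEq 𝒴 f)
    {X Y : Set α} (hX : X ∈ 𝒴) (hY : Y ∈ 𝒴) (hXY : X ∪ Y ∈ 𝒴) :
    f (X ∪ Y) = f X ∨ f (X ∪ Y) = f Y ∨ f (X ∪ Y) = f X ∪ f Y := by
  by_cases hXf : (X ∩ f (X ∪ Y)).Nonempty
  · by_cases hYf : (Y ∩ f (X ∪ Y)).Nonempty
    · exact Or.inr <| Or.inr <| apply_union_eq_union_of_inter_nonempty hSub hEq hX hY hXY hXf hYf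
    · exact Or.inl <| apply_union_eq_left_of_not_inter_nonempty hSub hCum hX hXY hYf
  · rw [Set.union_comm] at hXY hXf ⊢
    exact Or.inr <| Or.inl <| apply_union_eq_left_of_not_inter_nonempty hSub hCum hY hXY hXf

theorem pair_mem (hUnion : ∀ A ∈ 𝒴, ∀ B ∈ 𝒴, A ∪ B ∈ 𝒴) (hSing : ∀ a : α, ({a} : Set α) ∈ 𝒴)
    (a b : α) : ({a, b} : Set α) ∈ 𝒴 := by
  rw [Set.insert_eq]
  exact hUnion _ (hSing a) _ (hSing b)

theorem notMem_apply_pair_of_mem_apply (hSub : MuSubset 𝒴 f) (hEq : MuEq 𝒴 f)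
    {X : Set α} (hX : X ∈ 𝒴) {a b : α} (ha : a ∈ X \ f X) (hb : b ∈ f X)
    (hab : ({a, b} : Set α) ∈ 𝒴) : a ∉ f {a, b} := by
  have hsub : ({a, b} : Set α) ⊆ X :=
    Set.insert_subset ha.1 (Set.singleton_subset_iff.2 (hSub X hX hb))
  rw [hEq _ hab X hX hsub ⟨b, Set.mem_insert_of_mem a rfl, hb⟩]
  exact fun h => ha.2 h.1

theorem apply_singleton_eq_empty (hCum : MuCum 𝒴 f) (hSing : ∀ a : α, ({a} : Set α) ∈ 𝒴)
    {X : Set α} (hX : X ∈ 𝒴) (hfX : f X = ∅) {a : α} (ha : a ∈ X) : f {a} = ∅ := by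
  rw [hCum X hX {a} (hSing a) (hfX ▸ Set.empty_subset _) (Set.singleton_subset_iff.2 ha), hfX]

theorem muIn (hSub : MuSubset 𝒴 f) (hCum : MuCum 𝒴 f) (hEq : MuEq 𝒴 f)
    (hUnion : ∀ A ∈ 𝒴, ∀ B ∈ 𝒴, A ∪ B ∈ 𝒴) (hSing : ∀ a : α, ({a} : Set α) ∈ 𝒴)
    {X : Set α} (hX : X ∈ 𝒴) {a : α} (ha : a ∈ X \ f X) :
    ∃ b ∈ X, ({a, b} : Set α) ∈ 𝒴 ∧ a ∉ f {a, b} := by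
  rcases (f X).eq_empty_or_nonempty with hfX | ⟨b, hb⟩
  · refine ⟨a, ha.1, pair_mem hUnion hSing a a, ?_⟩
    simp [apply_singleton_eq_empty hCum hSing hX hfX ha.1]
  · exact ⟨b, hSub X hX hb, pair_mem hUnion hSing a b,
      notMem_apply_pair_of_mem_apply hSub hEq hX ha hb (pair_mem hUnion hSing a b)⟩

end Choice

/-- (μ⊆), (μCUM), (μ=) imply: (a) (μ‖) given closure under finite unions;
(b) (μ∈) given closure under finite unions and all singletons in the domain. -/
theorem muCUM_muEq_imply_muPar_muIn {α : Type*} (𝒴 : Set (Set α)) (f : Set α → Set α)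
    (hSub : ∀ X ∈ 𝒴, f X ⊆ X)
    (hCum : ∀ X ∈ 𝒴, ∀ Y ∈ 𝒴, f X ⊆ Y → Y ⊆ X → f Y = f X)
    (hEq : ∀ X ∈ 𝒴, ∀ Y ∈ 𝒴, X ⊆ Y → (X ∩ f Y).Nonempty → f X = f Y ∩ X) :
    ((∀ A ∈ 𝒴, ∀ B ∈ 𝒴, A ∪ B ∈ 𝒴) →
      ∀ X ∈ 𝒴, ∀ Y ∈ 𝒴, X ∪ Y ∈ 𝒴 →
        f (X ∪ Y) = f X ∨ f (X ∪ Y) = f Y ∨ f (X ∪ Y) = f X ∪ f Y) ∧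
    ((∀ A ∈ 𝒴, ∀ B ∈ 𝒴, A ∪ B ∈ 𝒴) → (∀ a : α, ({a} : Set α) ∈ 𝒴) →
      ∀ X ∈ 𝒴, ∀ a ∈ X \ f X, ∃ b ∈ X, ({a, b} : Set α) ∈ 𝒴 ∧ a ∉ f {a, b}) :=
  ⟨fun _ _ hX _ hY hXY => Choice.muPar hSub hCum hEq hX hY hXY,
    fun hUnion hSing _ hX _ ha => Choice.muIn hSub hCum hEq hUnion hSing hX ha⟩
end

section
/- Let U be a set and f : 𝒫(U) → 𝒫(U) with f(X) ⊆ X for every X ⊆ U. For X ⊆ U, call A ⊆ U big in X iff f(X) ⊆ A ⊆ X, and small in X iff A ⊆ X and A ∩ f(X) = ∅. Then: (a) f satisfies (μCM) (for all X, Y ⊆ U, f(X) ⊆ Y ⊆ X implies f(Y) ⊆ f(X)) if and only if for every X ⊆ U and all A, B ⊆ X with A big in X and B small in X, A \ B is big in X \ B; (b) f satisfies (μRatM) (for all X, Y ⊆ U with X ⊆ Y and X ∩ f(Y) ≠ ∅, f(X) ⊆ f(Y) ∩ X) if and only if for every X ⊆ U and all A, B ⊆ X with A big in X and B not big in X, A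 \ B is big in X \ B. -/
/-!
Removing `B` from `X` keeps a big set `A` big as soon as `f (X \ B) ⊆ f X`, and that inclusion
is exactly what (μCM) resp. (μRatM) provide when `B` is small resp. not big. Conversely, applying
the coherence condition to `A = f X` and `B = X \ Y` gives back (μCM) resp. (μRatM), because
`X \ (X \ Y) = Y` for `Y ⊆ X`.
-/

namespace ChoiceFunction

variable {α : Type*}

def IsBig (f : Set α → Set α) (X A : Set α) : Prop := f X ⊆ A ∧ A ⊆ X

def IsSmall (f : Set α → Set α) (X A : Set α) : Prop := A ⊆ X ∧ A ∩ f X = ∅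

def MuCM (f : Set α → Set α) : Prop := ∀ X Y : Set α, f X ⊆ Y → Y ⊆ X → f Y ⊆ f X

def MuRatM (f : Set α → Set α) : Prop :=
  ∀ X Y : Set α, X ⊆ Y → (X ∩ f Y).Nonempty → f X ⊆ f Y ∩ X

/-- The condition (R↓). -/
def BigSdiffSmallIsBig (f : Set α → Set α) : Prop :=
  ∀ X A B : Set α, A ⊆ X → B ⊆ X → IsBig f X A → IsSmall f X B → IsBig f (X \ B) (A \ B)

/-- The condition (R↓↓). -/
def BigSdiffNonbigIsBig (f : Set α → Set α) : Prop :=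
  ∀ X A B : Set α, A ⊆ X → B ⊆ X → IsBig f X A → ¬ IsBig f X B → IsBig f (X \ B) (A \ B)

variable {f : Set α → Set α}

theorem isBig_self (hSub : ∀ X, f X ⊆ X) (X : Set α) : IsBig f X (f X) :=
  ⟨subset_rfl, hSub X⟩

theorem IsBig.sdiff (hSub : ∀ X, f X ⊆ X) {X A B : Set α} (hA : IsBig f X A)
    (hB : f (X \ B) ⊆ f X) : IsBig f (X \ B) (A \ B) :=
  ⟨fun _ hx => ⟨hA.1 (hB hx), (hSub _ hx).2⟩, Set.sdiff_subset_sdiff_left hA.2⟩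

theorem image_subset_of_isBig_sdiff_sdiff {X Y : Set α} (hYX : Y ⊆ X)
    (h : IsBig f (X \ (X \ Y)) (f X \ (X \ Y))) : f Y ⊆ f X := by
  rw [Set.sdiff_sdiff_cancel_left hYX] at h
  exact h.1.trans Set.sdiff_subset

theorem subset_sdiff_of_isSmall (hSub : ∀ X, f X ⊆ X) {X B : Set α} (hB : IsSmall f X B) :
    f X ⊆ X \ B :=
  Set.subset_sdiff.2 ⟨hSub X, (Set.disjoint_iff_inter_eq_empty.2 hB.2).symm⟩

theorem isSmall_sdiff_of_subset {X Y : Set α} (hfXY : f X ⊆ Y) : IsSmall f X (X \ Y) :=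
  ⟨Set.sdiff_subset, Set.eq_empty_of_forall_notMem fun _ hx => hx.1.2 (hfXY hx.2)⟩

theorem sdiff_inter_nonempty_of_not_isBig (hSub : ∀ X, f X ⊆ X) {X B : Set α} (hBX : B ⊆ X)
    (hB : ¬ IsBig f X B) : ((X \ B) ∩ f X).Nonempty := by
  obtain ⟨x, hx, hxB⟩ := Set.not_subset.1 fun h => hB ⟨h, hBX⟩
  exact ⟨x, ⟨hSub X hx, hxB⟩, hx⟩

theorem not_isBig_sdiff_of_inter_nonempty {X Y : Set α} (hXf : (X ∩ f Y).Nonempty) :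
    ¬ IsBig f Y (Y \ X) := by
  obtain ⟨x, hxX, hxf⟩ := hXf
  exact fun h => (h.1 hxf).2 hxX

theorem muCM_iff_bigSdiffSmallIsBig (hSub : ∀ X, f X ⊆ X) : MuCM f ↔ BigSdiffSmallIsBig f :=
  ⟨fun hCM _ _ _ _ _ hA hB => hA.sdiff hSub (hCM _ _ (subset_sdiff_of_isSmall hSub hB)
      Set.sdiff_subset),
    fun hR X _ hfXY hYX => image_subset_of_isBig_sdiff_sdiff hYX <|
      hR X _ _ (hSub X) Set.sdiff_subset (isBig_self hSub X) (isSmall_sdiff_of_subset hfXY)⟩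

theorem muRatM_iff_bigSdiffNonbigIsBig (hSub : ∀ X, f X ⊆ X) :
    MuRatM f ↔ BigSdiffNonbigIsBig f :=
  ⟨fun hRat _ _ _ _ hBX hA hB => hA.sdiff hSub <|
      (hRat _ _ Set.sdiff_subset (sdiff_inter_nonempty_of_not_isBig hSub hBX hB)).trans
        Set.inter_subset_left,
    fun hR X Y hXY hXf => Set.subset_inter (image_subset_of_isBig_sdiff_sdiff hXY <|
      hR Y _ _ (hSub Y) Set.sdiff_subset (isBig_self hSub Y)
        (not_isBig_sdiff_of_inter_nonempty hXf)) (hSub X)⟩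

end ChoiceFunction

/-- (a) (μCM) is equivalent to the coherence condition (R↓):
big minus small is big in the reduced set;
(b) (μRatM) is equivalent to (R↓↓): big minus non-big is big in the reduced set. -/
theorem muCM_muRatM_filter_coherence {α : Type*} (f : Set α → Set α)
    (hSub : ∀ X : Set α, f X ⊆ X) :
    let Big : Set α → Set α → Prop := fun X A => f X ⊆ A ∧ A ⊆ X
    let Small : Set α → Set α → Prop := fun X A => A ⊆ X ∧ A ∩ f X = ∅
    ((∀ X Y : Set α, f X ⊆ Y → Y ⊆ X → f Y ⊆ f X) ↔
      (∀ X A B : Set α, A ⊆ X → B ⊆ X → Big X A → Small X B → Big (X \ B) (A \ B))) ∧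
    ((∀ X Y : Set α, X ⊆ Y → (X ∩ f Y).Nonempty → f X ⊆ f Y ∩ X) ↔
      (∀ X A B : Set α, A ⊆ X → B ⊆ X → Big X A → ¬ Big X B → Big (X \ B) (A \ B))) :=
  ⟨ChoiceFunction.muCM_iff_bigSdiffSmallIsBig hSub,
    ChoiceFunction.muRatM_iff_bigSdiffNonbigIsBig hSub⟩
end

section
/- Let ⟨I, ℓ, ≺⟩ be a preferential structure over a set U with minimization function μ, let 𝒴 be a collection of subsets of U, and suppose the structure is smooth for every X ∈ 𝒴. Then μ satisfies (μ⊆), (μPR), and (μCUM) on 𝒴; in particular, for all X, Y ∈ 𝒴, if μ(X) ⊆ Y ⊆ X then μ(Y) = μ(X). -/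
/-- The minimization function of a preferential structure ⟨I, ℓ, ≺⟩ over U. -/
def prefMu {I U : Type*} (ℓ : I → U) (prec : I → I → Prop) (X : Set U) : Set U :=
  {x ∈ X | ∃ i : I, ℓ i = x ∧ ¬ ∃ j : I, ℓ j ∈ X ∧ prec j i}

def IsSmoothFor {I U : Type*} (ℓ : I → U) (prec : I → I → Prop) (X : Set U) : Prop :=
  ∀ i : I, ℓ i ∈ X →
    (¬ ∃ j : I, ℓ j ∈ X ∧ prec j i) ∨
    (∃ j : I, prec j i ∧ ℓ j ∈ X ∧ ¬ ∃ k : I, ℓ k ∈ X ∧ prec k j)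

section PrefMu

variable {I U : Type*} {ℓ : I → U} {prec : I → I → Prop} {X Y : Set U}

theorem prefMu_subset : prefMu ℓ prec X ⊆ X := fun _ hx => hx.1

theorem label_mem_prefMu {i : I} (hi : ℓ i ∈ X) (hmin : ¬ ∃ j : I, ℓ j ∈ X ∧ prec j i) :
    ℓ i ∈ prefMu ℓ prec X :=
  ⟨hi, i, rfl, hmin⟩

theorem prefMu_inter_subset_prefMu (hXY : X ⊆ Y) : prefMu ℓ prec Y ∩ X ⊆ prefMu ℓ prec X := by
  rintro x ⟨⟨-, i, rfl, hmin⟩, hxX⟩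
  exact label_mem_prefMu hxX fun ⟨j, hjX, hji⟩ => hmin ⟨j, hXY hjX, hji⟩

theorem prefMu_subset_prefMu_of_prefMu_subset (hμX : prefMu ℓ prec X ⊆ Y) (hYX : Y ⊆ X) :
    prefMu ℓ prec X ⊆ prefMu ℓ prec Y := fun _ hx =>
  prefMu_inter_subset_prefMu hYX ⟨hx, hμX hx⟩

/-- A copy minimal in `Y` stays minimal in `X`: by smoothness, anything below it in `X` would
put a copy below it whose label lies in `μ(X) ⊆ Y`. -/
theorem prefMu_subset_prefMu_of_isSmoothFor (hX : IsSmoothFor ℓ prec X)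
    (hμX : prefMu ℓ prec X ⊆ Y) (hYX : Y ⊆ X) : prefMu ℓ prec Y ⊆ prefMu ℓ prec X := by
  rintro x ⟨hxY, i, rfl, hminY⟩
  refine label_mem_prefMu (hYX hxY) ?_
  rcases hX i (hYX hxY) with hminX | ⟨k, hki, hkX, hminK⟩
  · exact hminX
  · exact (hminY ⟨k, hμX (label_mem_prefMu hkX hminK), hki⟩).elim

theorem prefMu_eq_of_isSmoothFor (hX : IsSmoothFor ℓ prec X)
    (hμX : prefMu ℓ prec X ⊆ Y) (hYX : Y ⊆ X) : prefMu ℓ prec Y = prefMu ℓ prec X :=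
  (prefMu_subset_prefMu_of_isSmoothFor hX hμX hYX).antisymm
    (prefMu_subset_prefMu_of_prefMu_subset hμX hYX)

end PrefMu

/-- (μ⊆), (μPR) and (μCUM) hold (on 𝒴) in preferential structures smooth for every X ∈ 𝒴. -/
theorem smooth_prefMu_muSub_muPR_muCUM {I U : Type*} (ℓ : I → U) (prec : I → I → Prop)
    (𝒴 : Set (Set U))
    (hSmooth : ∀ X ∈ 𝒴, ∀ i : I, ℓ i ∈ X →
      (¬ ∃ j : I, ℓ j ∈ X ∧ prec j i) ∨
      (∃ j : I, prec j i ∧ ℓ j ∈ X ∧ ¬ ∃ k : I, ℓ k ∈ X ∧ prec k j)) :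
    (∀ X ∈ 𝒴, prefMu ℓ prec X ⊆ X) ∧
    (∀ X ∈ 𝒴, ∀ Y ∈ 𝒴, X ⊆ Y → prefMu ℓ prec Y ∩ X ⊆ prefMu ℓ prec X) ∧
    (∀ X ∈ 𝒴, ∀ Y ∈ 𝒴, prefMu ℓ prec X ⊆ Y → Y ⊆ X →
      prefMu ℓ prec Y = prefMu ℓ prec X) :=
  ⟨fun _ _ => prefMu_subset,
    fun _ _ _ _ hXY => prefMu_inter_subset_prefMu hXY,
    fun X hX _ _ hμX hYX => prefMu_eq_of_isSmoothFor (hSmooth X hX) hμX hYX⟩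
end

section
/- Let Z be a set, 𝒴 a collection of subsets of Z, and μ a function assigning to each X ∈ 𝒴 a subset μ(X) ⊆ Z satisfying (μ⊆) and (μPR). Let U ∈ 𝒴 and x ∈ Z, and write 𝒴ₓ := {Y ∈ 𝒴 : x ∈ Y \ μ(Y)}. Then x ∈ μ(U) if and only if x ∈ U and there exists a choice function g on 𝒴ₓ with g(Y) ∈ Y for every Y ∈ 𝒴ₓ and g(Y) ∉ U for every Y ∈ 𝒴ₓ. -/
/-! If `x ∈ μ U` and `Y ∈ 𝒴ₓ`, then `Y ⊄ U`, since otherwise (μPR) would put `x` into `μ Y`;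
so `g Y` can be any point of `Y \ U`. Conversely, if `x ∈ U \ μ U` then `U ∈ 𝒴ₓ`, and no
point `g U` can lie in `U` and avoid `U`. -/

theorem diff_nonempty_of_mem_mu {α : Type*} {μ : Set α → Set α} {U Y : Set α} {x : α}
    (hPR : Y ⊆ U → μ U ∩ Y ⊆ μ Y) (hx : x ∈ μ U) (hxY : x ∈ Y \ μ Y) : (Y \ U).Nonempty :=
  Set.sdiff_nonempty.2 fun hYU => hxY.2 (hPR hYU ⟨hx, hxY.1⟩)

/-- Characterization of minimal elements via choice functions avoiding U
(Claim Mu-f): for μ satisfying (μ⊆) and (μPR), `x ∈ μ(U)` iff `x ∈ U` and there is a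
choice function on 𝒴ₓ = {Y ∈ 𝒴 : x ∈ Y \ μ(Y)} whose range avoids U. -/
theorem mu_iff_choice_function {α : Type*} (𝒴 : Set (Set α)) (μ : Set α → Set α)
    (hSub : ∀ X ∈ 𝒴, μ X ⊆ X)
    (hPR : ∀ X ∈ 𝒴, ∀ Y ∈ 𝒴, X ⊆ Y → μ Y ∩ X ⊆ μ X)
    (U : Set α) (hU : U ∈ 𝒴) (x : α) :
    x ∈ μ U ↔ x ∈ U ∧ ∃ g : Set α → α,
      ∀ Y ∈ 𝒴, x ∈ Y \ μ Y → g Y ∈ Y ∧ g Y ∉ U := by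
  constructor
  · intro hx
    have : Nonempty α := ⟨x⟩
    refine ⟨hSub U hU hx, fun Y => Classical.epsilon (· ∈ Y \ U), fun Y hY hxY => ?_⟩
    exact Classical.epsilon_spec (diff_nonempty_of_mem_mu (hPR Y hY U hU) hx hxY)
  · rintro ⟨hxU, g, hg⟩
    by_contra hx
    obtain ⟨hgU, hgU'⟩ := hg U hU ⟨hxU, hx⟩
    exact hgU' hgU
end

section
/- Let Z be a set, 𝒴 a collection of subsets of Z, and μ a function assigning to each X ∈ 𝒴 a subset μ(X) ⊆ Z satisfying (μ⊆) and (μPR). Then there exists a preferential structure ⟨I, ℓ, ≺⟩ over Z whose relation ≺ is transitive and whose minimization function agrees with μ on 𝒴, i.e., μ(X) = {x ∈ X : there is i ∈ I with ℓ(i) = x and no j ∈ I with ℓ(j) ∈ X and j ≺ i} for every X ∈ 𝒴. -/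
/-!
A copy of `x` is a pair `(x, D)` in which `D` defends `x` and each of its own elements: whenever
one of them lies in some `Y ∈ 𝒴` outside `μ Y`, some element of `D` lies in `Y`. A copy `(z, E)`
is below `(x, D)` when `z ∈ D` and `E ⊆ D`, which is transitive. If `x ∈ μ X`, then `(x, Xᶜ)` is a
copy by (μPR), and no copy labelled in `X` is below it. Conversely, if a copy `(x, D)` is minimal
in `X`, then `D` misses `X` (for `z ∈ D ∩ X`, `(z, D)` would be a smaller copy), so `x` cannot fail
in `X`: `x ∈ μ X`.
-/

universe u

namespace PrefRepresentation

variable {α : Type u} (𝒴 : Set (Set α)) (μ : Set α → Set α)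

def Defends (D : Set α) (y : α) : Prop :=
  ∀ Y ∈ 𝒴, y ∈ Y → y ∉ μ Y → (D ∩ Y).Nonempty

def IsCopy (p : α × Set α) : Prop :=
  ∀ y ∈ insert p.1 p.2, Defends 𝒴 μ p.2 y

def Copy : Type u := {p : α × Set α // IsCopy 𝒴 μ p}

def Copy.label (i : Copy 𝒴 μ) : α := i.1.1

def copyPrec (j i : Copy 𝒴 μ) : Prop := j.1.1 ∈ i.1.2 ∧ j.1.2 ⊆ i.1.2

theorem copyPrec_trans : Transitive (copyPrec 𝒴 μ) :=
  fun _ _ _ ⟨hk, hkE⟩ ⟨_, hjE⟩ => ⟨hjE hk, hkE.trans hjE⟩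

variable {𝒴 μ}

theorem IsCopy.of_mem {x z : α} {D : Set α} (h : IsCopy 𝒴 μ (x, D)) (hz : z ∈ D) :
    IsCopy 𝒴 μ (z, D) := by
  intro y hy
  exact h y (Set.mem_insert_of_mem x (Set.insert_subset hz le_rfl hy))

theorem isCopy_compl {X : Set α} {x : α} (hPR : ∀ Y ∈ 𝒴, Y ⊆ X → μ X ∩ Y ⊆ μ Y)
    (hx : x ∈ μ X) : IsCopy 𝒴 μ (x, Xᶜ) := by
  intro y hy Y hY hyY hyμ
  by_contra hdisj
  have hYX : Y ⊆ X := fun z hz => by_contra fun hzX => hdisj ⟨z, hzX, hz⟩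
  rcases hy with rfl | hyX
  · exact hyμ (hPR Y hY hYX ⟨hx, hyY⟩)
  · exact hyX (hYX hyY)

theorem subset_prefMu_copy {X : Set α} (hSub : μ X ⊆ X)
    (hPR : ∀ Y ∈ 𝒴, Y ⊆ X → μ X ∩ Y ⊆ μ Y) :
    μ X ⊆ prefMu (Copy.label 𝒴 μ) (copyPrec 𝒴 μ) X := by
  intro x hx
  refine ⟨hSub hx, ⟨(x, Xᶜ), isCopy_compl hPR hx⟩, rfl, ?_⟩
  rintro ⟨j, hjX, hjXc, -⟩
  exact hjXc hjX

theorem prefMu_copy_subset {X : Set α} (hX : X ∈ 𝒴) :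
    prefMu (Copy.label 𝒴 μ) (copyPrec 𝒴 μ) X ⊆ μ X := by
  rintro _ ⟨hxX, ⟨⟨x, D⟩, hcopy⟩, rfl, hmin⟩
  have hDX : ¬ (D ∩ X).Nonempty := by
    rintro ⟨z, hzD, hzX⟩
    exact hmin ⟨⟨(z, D), hcopy.of_mem hzD⟩, hzX, hzD, le_rfl⟩
  by_contra hxμ
  exact hDX (hcopy x (Set.mem_insert x D) X hX hxX hxμ)

end PrefRepresentation

/-- Any μ satisfying (μ⊆) and (μPR) is represented by a transitive preferential structure. -/
theorem representation_transitive {α : Type u} (𝒴 : Set (Set α)) (μ : Set α → Set α)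
    (hSub : ∀ X ∈ 𝒴, μ X ⊆ X)
    (hPR : ∀ X ∈ 𝒴, ∀ Y ∈ 𝒴, X ⊆ Y → μ Y ∩ X ⊆ μ X) :
    ∃ (I : Type u) (ℓ : I → α) (prec : I → I → Prop),
      Transitive prec ∧ ∀ X ∈ 𝒴, μ X = prefMu ℓ prec X :=
  ⟨PrefRepresentation.Copy 𝒴 μ, PrefRepresentation.Copy.label 𝒴 μ,
    PrefRepresentation.copyPrec 𝒴 μ, PrefRepresentation.copyPrec_trans 𝒴 μ, fun X hX =>
    (PrefRepresentation.subset_prefMu_copy (hSub X hX) fun Y hY hYX =>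
      hPR Y hY X hX hYX).antisymm (PrefRepresentation.prefMu_copy_subset hX)⟩
end

section
/- Let Z be a set, 𝒴 a collection of subsets of Z closed under finite unions, and μ a function assigning to each X ∈ 𝒴 a subset μ(X) ⊆ Z satisfying (μ⊆), (μPR), and (μCUM). Then there exists a preferential structure ⟨I, ℓ, ≺⟩ over Z whose relation ≺ is transitive, which is smooth for every X ∈ 𝒴, and whose minimization function agrees with μ on 𝒴. -/
universe u

/-!
The copies of the representing structure are the nonempty finite chains of choices
`(B₁, y₁), …, (Bₙ, yₙ)` with `Bₖ ∈ 𝒴` and `yₖ ∈ μ(Hₖ₋₁ ∪ Bₖ) \ Hₖ₋₁`, where `Hₖ = B₁ ∪ ⋯ ∪ Bₖ`;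
a chain is labelled by its last choice, and a chain lies below every chain it properly extends,
which makes `≺` transitive. Once `μ(H ∪ S) ⊆ H` holds for the history `H` of a chain, (μPR) and
(μCUM) propagate this along every extension and keep all later choices out of `S`. So a copy
either has no copy below it in `S`, or the one-step extension by `S` is such a copy and is
minimal in `S`; this gives smoothness. For `μ X = prefMu`, a copy labelled `z ∈ X` with no copy
below it in `X` has `μ(H ∪ X) ⊆ H`, hence `z ∈ μ H = μ(H ∪ X)` by (μCUM) and `z ∈ μ X` by (μPR).
-/

namespace SmoothRepresentation

variable {α : Type u}

structure IsSmoothChoice (𝒴 : Set (Set α)) (μ : Set α → Set α) : Prop where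
  supClosed : SupClosed 𝒴
  subset : ∀ X ∈ 𝒴, μ X ⊆ X
  pr : ∀ X ∈ 𝒴, ∀ Y ∈ 𝒴, X ⊆ Y → μ Y ∩ X ⊆ μ X
  cum : ∀ X ∈ 𝒴, ∀ Y ∈ 𝒴, μ X ⊆ Y → Y ⊆ X → μ Y = μ X

def hist : List (Set α × α) → Set α
  | [] => ∅
  | b :: p => hist p ∪ b.1

/-- Chains are listed latest choice first. -/
def IsChain (𝒴 : Set (Set α)) (μ : Set α → Set α) : List (Set α × α) → Prop
  | [] => True
  | b :: p => IsChain 𝒴 μ p ∧ b.1 ∈ 𝒴 ∧ b.2 ∈ μ (hist p ∪ b.1) \ hist p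

def Settles (μ : Set α → Set α) (p : List (Set α × α)) (S : Set α) : Prop :=
  μ (hist p ∪ S) ⊆ hist p

variable {𝒴 : Set (Set α)} {μ : Set α → Set α} {p r : List (Set α × α)} {b : Set α × α}
  {S : Set α}

theorem hist_union_mem (hU : SupClosed 𝒴) :
    ∀ {p S}, IsChain 𝒴 μ p → S ∈ 𝒴 → hist p ∪ S ∈ 𝒴
  | [], _, _, hS => by simpa [hist] using hS
  | _ :: _, _, h, hS => by
      rw [hist, Set.union_assoc]
      exact hist_union_mem hU h.1 (hU h.2.1 hS)

namespace IsChain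

theorem of_append : ∀ {r}, IsChain 𝒴 μ (r ++ p) → IsChain 𝒴 μ p
  | [], h => h
  | _ :: _, h => of_append h.1

theorem hist_mem (hU : SupClosed 𝒴) (h : IsChain 𝒴 μ (b :: p)) : hist (b :: p) ∈ 𝒴 :=
  hist_union_mem hU h.1 h.2.1

theorem snd_mem_fst (hU : SupClosed 𝒴) (hSub : ∀ X ∈ 𝒴, μ X ⊆ X)
    (h : IsChain 𝒴 μ (b :: p)) : b.2 ∈ b.1 :=
  (hSub _ (h.hist_mem hU) h.2.2.1).resolve_left h.2.2.2

theorem settles_fst (hU : SupClosed 𝒴) (hSub : ∀ X ∈ 𝒴, μ X ⊆ X)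
    (h : IsChain 𝒴 μ (b :: p)) : Settles μ (b :: p) b.1 := by
  rw [Settles, hist, Set.union_assoc, Set.union_self]
  exact hSub _ (h.hist_mem hU)

end IsChain

theorem exists_isChain_cons_or_settles (hS : S ∈ 𝒴) (h : IsChain 𝒴 μ p) :
    (∃ y, IsChain 𝒴 μ ((S, y) :: p)) ∨ Settles μ p S := by
  by_cases hp : Settles μ p S
  · exact .inr hp
  · obtain ⟨y, hy⟩ := Set.not_subset.mp hp
    exact .inl ⟨y, h, hS, hy⟩

namespace Settles

theorem cons (hμ : IsSmoothChoice 𝒴 μ) (hS : S ∈ 𝒴) (hp : Settles μ p S) (h : IsChain 𝒴 μ (b :: p)) :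
    Settles μ (b :: p) S ∧ b.2 ∉ S := by
  obtain ⟨hchain, hB, hbμ, hbH⟩ := h
  set H := hist p
  have hHS : H ∪ S ∈ 𝒴 := hist_union_mem hμ.supClosed hchain hS
  have hHB : H ∪ b.1 ∈ 𝒴 := hist_union_mem hμ.supClosed hchain hB
  have hHBS : H ∪ b.1 ∪ S ∈ 𝒴 := hμ.supClosed hHB hS
  have hS_to_H : ∀ w ∈ μ (H ∪ b.1 ∪ S), w ∈ S → w ∈ H := fun w hw hwS =>
    hp (hμ.pr _ hHS _ hHBS (Set.union_subset_union_left _ Set.subset_union_left) ⟨hw, .inr hwS⟩)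
  have hsettles : μ (H ∪ b.1 ∪ S) ⊆ H ∪ b.1 := fun w hw =>
    (hμ.subset _ hHBS hw).elim id fun hwS => .inl (hS_to_H w hw hwS)
  refine ⟨hsettles, fun hbS => hbH (hS_to_H _ ?_ hbS)⟩
  rwa [← hμ.cum _ hHBS _ hHB hsettles Set.subset_union_left]

theorem append (hμ : IsSmoothChoice 𝒴 μ) (hS : S ∈ 𝒴) (hp : Settles μ p S) : ∀ {r}, IsChain 𝒴 μ (r ++ p) → Settles μ (r ++ p) S
  | [], _ => hp
  | _ :: _, h => (cons hμ hS (append hμ hS hp h.1) h).1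

theorem snd_not_mem (hμ : IsSmoothChoice 𝒴 μ) (hS : S ∈ 𝒴) (hp : Settles μ p S) (h : IsChain 𝒴 μ (r ++ p)) (hb : b ∈ r) :
    b.2 ∉ S := by
  obtain ⟨r₁, r₂, rfl⟩ := List.append_of_mem hb
  have h' : IsChain 𝒴 μ (b :: (r₂ ++ p)) := IsChain.of_append (r := r₁) (by simpa using h)
  exact (cons hμ hS (append hμ hS hp h'.1) h').2

end Settles

structure Node (𝒴 : Set (Set α)) (μ : Set α → Set α) : Type u where
  chain : List (Set α × α)
  isChain : IsChain 𝒴 μ chain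
  ne_nil : chain ≠ []

namespace Node

def label (i : Node 𝒴 μ) : α := (i.chain.head i.ne_nil).2

def Below (j i : Node 𝒴 μ) : Prop := ∃ r ≠ [], j.chain = r ++ i.chain

theorem below_trans : Transitive (Below (𝒴 := 𝒴) (μ := μ)) := by
  rintro i j k ⟨r, hr, hij⟩ ⟨s, -, hjk⟩
  exact ⟨r ++ s, by simp [hr], by rw [hij, hjk, List.append_assoc]⟩

def child (i : Node 𝒴 μ) {y : α} (h : IsChain 𝒴 μ ((S, y) :: i.chain)) : Node 𝒴 μ :=
  ⟨_, h, List.cons_ne_nil _ _⟩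

theorem child_below (i : Node 𝒴 μ) {y : α} (h : IsChain 𝒴 μ ((S, y) :: i.chain)) :
    (i.child h).Below i :=
  ⟨[(S, y)], List.cons_ne_nil _ _, rfl⟩

theorem hist_mem (hU : SupClosed 𝒴) (i : Node 𝒴 μ) : hist i.chain ∈ 𝒴 := by
  obtain ⟨_ | ⟨b, p⟩, h, hne⟩ := i
  · exact absurd rfl hne
  · exact h.hist_mem hU

theorem label_mem (i : Node 𝒴 μ) : i.label ∈ μ (hist i.chain) := by
  obtain ⟨_ | ⟨b, p⟩, h, hne⟩ := i
  · exact absurd rfl hne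
  · exact h.2.2.1

theorem not_exists_below_of_settles (hμ : IsSmoothChoice 𝒴 μ) (hS : S ∈ 𝒴) {i : Node 𝒴 μ}
    (hi : Settles μ i.chain S) : ¬ ∃ j : Node 𝒴 μ, j.label ∈ S ∧ j.Below i := by
  rintro ⟨⟨_, hj, hne⟩, hjS, r, hr, rfl⟩
  rw [label, List.head_append_of_ne_nil hr] at hjS
  exact hi.snd_not_mem hμ hS hj (List.head_mem hr) hjS

theorem smooth (hμ : IsSmoothChoice 𝒴 μ) (hS : S ∈ 𝒴) (i : Node 𝒴 μ) :
    (¬ ∃ j : Node 𝒴 μ, j.label ∈ S ∧ j.Below i) ∨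
      ∃ j : Node 𝒴 μ, j.Below i ∧ j.label ∈ S ∧ ¬ ∃ k : Node 𝒴 μ, k.label ∈ S ∧ k.Below j := by
  rcases exists_isChain_cons_or_settles hS i.isChain with ⟨y, hy⟩ | hi
  · exact .inr ⟨i.child hy, i.child_below hy, hy.snd_mem_fst hμ.supClosed hμ.subset,
      not_exists_below_of_settles hμ hS (hy.settles_fst hμ.supClosed hμ.subset)⟩
  · exact .inl (not_exists_below_of_settles hμ hS hi)

theorem prefMu_eq (hμ : IsSmoothChoice 𝒴 μ) {X : Set α} (hX : X ∈ 𝒴) :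
    prefMu (label (𝒴 := 𝒴) (μ := μ)) Below X = μ X := by
  ext z
  constructor
  · rintro ⟨hzX, i, rfl, hmin⟩
    rcases exists_isChain_cons_or_settles hX i.isChain with ⟨y, hy⟩ | hi
    · exact absurd ⟨i.child hy, hy.snd_mem_fst hμ.supClosed hμ.subset, i.child_below hy⟩ hmin
    · have hHX : hist i.chain ∪ X ∈ 𝒴 := hist_union_mem hμ.supClosed i.isChain hX
      refine hμ.pr _ hX _ hHX Set.subset_union_right ⟨?_, hzX⟩
      rw [← hμ.cum _ hHX _ (i.hist_mem hμ.supClosed) hi Set.subset_union_left]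
      exact i.label_mem
  · intro hz
    have hroot : IsChain 𝒴 μ [(X, z)] := ⟨trivial, hX, by simpa [hist] using hz⟩
    exact ⟨hμ.subset _ hX hz, ⟨_, hroot, List.cons_ne_nil _ _⟩, rfl,
      not_exists_below_of_settles hμ hX (hroot.settles_fst hμ.supClosed hμ.subset)⟩

end Node

end SmoothRepresentation

open SmoothRepresentation

/-- Any μ satisfying (μ⊆), (μPR), (μCUM) on a domain closed under finite unions
is represented by a transitive preferential structure which is smooth for every X ∈ 𝒴. -/
theorem representation_smooth_transitive {α : Type u} (𝒴 : Set (Set α)) (μ : Set α → Set α)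
    (hUnion : ∀ A ∈ 𝒴, ∀ B ∈ 𝒴, A ∪ B ∈ 𝒴)
    (hSub : ∀ X ∈ 𝒴, μ X ⊆ X)
    (hPR : ∀ X ∈ 𝒴, ∀ Y ∈ 𝒴, X ⊆ Y → μ Y ∩ X ⊆ μ X)
    (hCum : ∀ X ∈ 𝒴, ∀ Y ∈ 𝒴, μ X ⊆ Y → Y ⊆ X → μ Y = μ X) :
    ∃ (I : Type u) (ℓ : I → α) (prec : I → I → Prop),
      Transitive prec ∧
      (∀ X ∈ 𝒴, ∀ i : I, ℓ i ∈ X →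
        (¬ ∃ j : I, ℓ j ∈ X ∧ prec j i) ∨
        (∃ j : I, prec j i ∧ ℓ j ∈ X ∧ ¬ ∃ k : I, ℓ k ∈ X ∧ prec k j)) ∧
      (∀ X ∈ 𝒴, μ X = prefMu ℓ prec X) := by
  have hμ : IsSmoothChoice 𝒴 μ := ⟨fun A hA B hB => hUnion A hA B hB, hSub, hPR, hCum⟩
  exact ⟨Node 𝒴 μ, Node.label, Node.Below, Node.below_trans,
    fun X hX i _ => Node.smooth hμ hX i, fun X hX => (Node.prefMu_eq hμ hX).symm⟩
end

section
/- Let ≺ be an irreflexive binary relation on a set X that is ranked and free of cycles. Then ≺ is transitive. -/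
theorem ranked_acyclic_transitive_general {X : Type*} (prec : X → X → Prop)
    (hRank : ∀ x y, ¬ prec x y → ¬ prec y x →
      ∀ z, (prec z x → prec z y) ∧ (prec x z → prec y z))
    (hAcyc : ∀ x, ¬ Relation.TransGen prec x x) :
    Transitive prec := by
  intro x y z hxy hyz
  by_contra hxz
  by_cases hzx : prec z x
  · exact hAcyc x (.tail (.tail (.single hxy) hyz) hzx)
  · have hzy : prec z y := (hRank x z hxz hzx y).2 hxy
    exact hAcyc y (.tail (.single hyz) hzy)

/-- An irreflexive, ranked, cycle-free relation is transitive. -/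
theorem ranked_acyclic_transitive {X : Type*} (prec : X → X → Prop)
    (hIrr : ∀ x, ¬ prec x x)
    (hRank : ∀ x y, ¬ prec x y → ¬ prec y x →
      ∀ z, (prec z x → prec z y) ∧ (prec x z → prec y z))
    (hAcyc : ∀ x, ¬ Relation.TransGen prec x x) :
    Transitive prec :=
  ranked_acyclic_transitive_general prec hRank hAcyc
end

section
/- Let U be a set, 𝒴 a collection of subsets of U closed under finite unions, and μ a function assigning to each X ∈ 𝒴 a subset μ(X) ⊆ U satisfying (μ⊆), (μ∅), and (μ=). Then there exists a total preorder ≲ on U (total, reflexive, transitive) such that, writing x < y for (x ≲ y and not y ≲ x): (i) for every X ∈ 𝒴, μ(X) = {x ∈ X : there is no y ∈ X with y < x}; and (ii) for every X ∈ 𝒴 and every x ∈ X \ μ(X) there is y ∈ μ(X) with y < x (i.e., the representing ranked structure is 𝒴-smooth). -/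
/-!
Rank `x` below `y` when `x` is chosen from some set of `𝒴` that contains `y`, and put every
element that is never chosen at the top. Everything rests on one observation about a union
`X ∪ Y ∈ 𝒴`: its nonempty choice set meets `X` or `Y`, and by (μ=) it then restricts to the
choice set of that part. This makes "chosen over" total and transitive on chosen elements, and
shows that an element of `X` chosen over some element of `μ X` lies in `μ X` itself; the
representation and smoothness follow by comparing with any element of the nonempty set `μ X`.
-/

namespace RankedChoice

variable {α : Type*} {𝒴 : Set (Set α)} {μ : Set α → Set α} {X Y : Set α} {x y z : α}

/-- (μ⊆) -/
def MuSubset (𝒴 : Set (Set α)) (μ : Set α → Set α) : Prop :=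
  ∀ X ∈ 𝒴, μ X ⊆ X

/-- (μ∅) -/
def MuEmpty (𝒴 : Set (Set α)) (μ : Set α → Set α) : Prop :=
  ∀ X ∈ 𝒴, μ X = ∅ → X = ∅

/-- (μ=) -/
def MuEq (𝒴 : Set (Set α)) (μ : Set α → Set α) : Prop :=
  ∀ X ∈ 𝒴, ∀ Y ∈ 𝒴, X ⊆ Y → (X ∩ μ Y).Nonempty → μ X = μ Y ∩ X

def ChosenOver (𝒴 : Set (Set α)) (μ : Set α → Set α) (x y : α) : Prop :=
  ∃ X ∈ 𝒴, x ∈ μ X ∧ y ∈ X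

def IsChosen (𝒴 : Set (Set α)) (μ : Set α → Set α) (x : α) : Prop :=
  ∃ X ∈ 𝒴, x ∈ μ X

/-- Elements that are never chosen form the top class of the preorder. -/
def rankLE (𝒴 : Set (Set α)) (μ : Set α → Set α) (x y : α) : Prop :=
  ChosenOver 𝒴 μ x y ∨ ¬ IsChosen 𝒴 μ y

theorem MuEmpty.nonempty (hEmpty : MuEmpty 𝒴 μ) (hX : X ∈ 𝒴) (hne : X.Nonempty) :
    (μ X).Nonempty :=
  Set.nonempty_iff_ne_empty.2 fun h => hne.ne_empty (hEmpty X hX h)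

theorem inter_mu_union_nonempty (hSub : MuSubset 𝒴 μ) (hEmpty : MuEmpty 𝒴 μ)
    (hXY : X ∪ Y ∈ 𝒴) (hne : (X ∪ Y).Nonempty) :
    (X ∩ μ (X ∪ Y)).Nonempty ∨ (Y ∩ μ (X ∪ Y)).Nonempty := by
  obtain ⟨w, hw⟩ := hEmpty.nonempty hXY hne
  rcases hSub _ hXY hw with hwX | hwY
  exacts [Or.inl ⟨w, hwX, hw⟩, Or.inr ⟨w, hwY, hw⟩]

theorem MuEq.mu_eq_mu_union_inter (hEq : MuEq 𝒴 μ) (hX : X ∈ 𝒴) (hXY : X ∪ Y ∈ 𝒴)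
    (h : (X ∩ μ (X ∪ Y)).Nonempty) : μ X = μ (X ∪ Y) ∩ X :=
  hEq X hX _ hXY Set.subset_union_left h

theorem MuEq.mem_mu_union (hEq : MuEq 𝒴 μ) (hX : X ∈ 𝒴) (hXY : X ∪ Y ∈ 𝒴)
    (h : (X ∩ μ (X ∪ Y)).Nonempty) (hx : x ∈ μ X) : x ∈ μ (X ∪ Y) :=
  (hEq.mu_eq_mu_union_inter hX hXY h ▸ hx).1

theorem MuEq.mem_mu_of_mem_mu_union (hEq : MuEq 𝒴 μ) (hX : X ∈ 𝒴) (hXY : X ∪ Y ∈ 𝒴)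
    (hxX : x ∈ X) (hx : x ∈ μ (X ∪ Y)) : x ∈ μ X :=
  hEq.mu_eq_mu_union_inter hX hXY ⟨x, hxX, hx⟩ ▸ ⟨hx, hxX⟩

/-- Either `μ (X ∪ Y)` meets `X`, or it meets `Y`, and then by (μ=) it contains `y ∈ X`. -/
theorem mem_mu_union_of_mem_mu (hSub : MuSubset 𝒴 μ) (hEmpty : MuEmpty 𝒴 μ) (hEq : MuEq 𝒴 μ)
    (hX : X ∈ 𝒴) (hY : Y ∈ 𝒴) (hXY : X ∪ Y ∈ 𝒴) (hx : x ∈ μ X) (hy : y ∈ μ Y) (hyX : y ∈ X) :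
    x ∈ μ (X ∪ Y) := by
  refine hEq.mem_mu_union hX hXY ?_ hx
  have hYX : Y ∪ X ∈ 𝒴 := Set.union_comm X Y ▸ hXY
  rcases inter_mu_union_nonempty hSub hEmpty hXY ⟨y, .inl hyX⟩ with hmeet | hmeet
  · exact hmeet
  · have hy' : y ∈ μ (Y ∪ X) := hEq.mem_mu_union hY hYX (Set.union_comm X Y ▸ hmeet) hy
    exact ⟨y, hyX, Set.union_comm Y X ▸ hy'⟩

theorem ChosenOver.mem_mu (hUnion : SupClosed 𝒴) (hSub : MuSubset 𝒴 μ) (hEmpty : MuEmpty 𝒴 μ)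
    (hEq : MuEq 𝒴 μ) (hX : X ∈ 𝒴) (hxX : x ∈ X) (hy : y ∈ μ X) (h : ChosenOver 𝒴 μ x y) :
    x ∈ μ X := by
  obtain ⟨Z, hZ, hxZ, hyZ⟩ := h
  have hx : x ∈ μ (Z ∪ X) := mem_mu_union_of_mem_mu hSub hEmpty hEq hZ hX (hUnion hZ hX) hxZ hy hyZ
  exact hEq.mem_mu_of_mem_mu_union hX (hUnion hX hZ) hxX (Set.union_comm Z X ▸ hx)

theorem ChosenOver.trans (hUnion : SupClosed 𝒴) (hSub : MuSubset 𝒴 μ) (hEmpty : MuEmpty 𝒴 μ)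
    (hEq : MuEq 𝒴 μ) (hxy : ChosenOver 𝒴 μ x y) (hyz : ChosenOver 𝒴 μ y z) :
    ChosenOver 𝒴 μ x z := by
  obtain ⟨X, hX, hx, hyX⟩ := hxy
  obtain ⟨Y, hY, hy, hzY⟩ := hyz
  exact ⟨X ∪ Y, hUnion hX hY,
    mem_mu_union_of_mem_mu hSub hEmpty hEq hX hY (hUnion hX hY) hx hy hyX, .inr hzY⟩

theorem chosenOver_total (hUnion : SupClosed 𝒴) (hSub : MuSubset 𝒴 μ) (hEmpty : MuEmpty 𝒴 μ)
    (hEq : MuEq 𝒴 μ) (hx : IsChosen 𝒴 μ x) (hy : IsChosen 𝒴 μ y) :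
    ChosenOver 𝒴 μ x y ∨ ChosenOver 𝒴 μ y x := by
  obtain ⟨X, hX, hxX⟩ := hx
  obtain ⟨Y, hY, hyY⟩ := hy
  rcases inter_mu_union_nonempty hSub hEmpty (hUnion hX hY) ⟨x, .inl (hSub X hX hxX)⟩ with h | h
  · exact .inl ⟨X ∪ Y, hUnion hX hY, hEq.mem_mu_union hX (hUnion hX hY) h hxX,
      .inr (hSub Y hY hyY)⟩
  · exact .inr ⟨Y ∪ X, hUnion hY hX,
      hEq.mem_mu_union hY (hUnion hY hX) (Set.union_comm X Y ▸ h) hyY, .inr (hSub X hX hxX)⟩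

theorem rankLE_total (hUnion : SupClosed 𝒴) (hSub : MuSubset 𝒴 μ) (hEmpty : MuEmpty 𝒴 μ)
    (hEq : MuEq 𝒴 μ) (x y : α) : rankLE 𝒴 μ x y ∨ rankLE 𝒴 μ y x := by
  by_cases hy : IsChosen 𝒴 μ y
  · by_cases hx : IsChosen 𝒴 μ x
    · exact (chosenOver_total hUnion hSub hEmpty hEq hx hy).imp .inl .inl
    · exact .inr (.inr hx)
  · exact .inl (.inr hy)

theorem rankLE_refl (hSub : MuSubset 𝒴 μ) (x : α) : rankLE 𝒴 μ x x := by
  by_cases hx : IsChosen 𝒴 μ x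
  · obtain ⟨X, hX, hxX⟩ := hx
    exact .inl ⟨X, hX, hxX, hSub X hX hxX⟩
  · exact .inr hx

theorem rankLE_trans (hUnion : SupClosed 𝒴) (hSub : MuSubset 𝒴 μ) (hEmpty : MuEmpty 𝒴 μ)
    (hEq : MuEq 𝒴 μ) (x y z : α) (hxy : rankLE 𝒴 μ x y) (hyz : rankLE 𝒴 μ y z) :
    rankLE 𝒴 μ x z := by
  rcases hyz with hyz | hz
  · rcases hxy with hxy | hy
    · exact .inl (hxy.trans hUnion hSub hEmpty hEq hyz)
    · exact absurd (hyz.imp fun _ ⟨hY, hy, _⟩ => ⟨hY, hy⟩) hy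
  · exact .inr hz

theorem exists_rankLT_of_mem_diff_mu (hUnion : SupClosed 𝒴) (hSub : MuSubset 𝒴 μ)
    (hEmpty : MuEmpty 𝒴 μ) (hEq : MuEq 𝒴 μ) (hX : X ∈ 𝒴) (hx : x ∈ X \ μ X) :
    ∃ y ∈ μ X, rankLE 𝒴 μ y x ∧ ¬ rankLE 𝒴 μ x y := by
  obtain ⟨y, hy⟩ := hEmpty.nonempty hX ⟨x, hx.1⟩
  refine ⟨y, hy, .inl ⟨X, hX, hy, hx.1⟩, ?_⟩
  rintro (hxy | hy')
  · exact hx.2 (hxy.mem_mu hUnion hSub hEmpty hEq hX hx.1 hy)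
  · exact hy' ⟨X, hX, hy⟩

theorem mu_eq_setOf_rankLE_minimal (hUnion : SupClosed 𝒴) (hSub : MuSubset 𝒴 μ)
    (hEmpty : MuEmpty 𝒴 μ) (hEq : MuEq 𝒴 μ) (hX : X ∈ 𝒴) :
    μ X = {x | x ∈ X ∧ ¬ ∃ y ∈ X, rankLE 𝒴 μ y x ∧ ¬ rankLE 𝒴 μ x y} := by
  ext x
  constructor
  · intro hx
    exact ⟨hSub X hX hx, fun ⟨y, hyX, _, hxy⟩ => hxy (.inl ⟨X, hX, hx, hyX⟩)⟩
  · rintro ⟨hxX, hmin⟩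
    by_contra hx
    obtain ⟨y, hy, hlt⟩ := exists_rankLT_of_mem_diff_mu hUnion hSub hEmpty hEq hX ⟨hxX, hx⟩
    exact hmin ⟨y, hSub X hX hy, hlt⟩

end RankedChoice

open RankedChoice in
/-- Representation of μ satisfying (μ⊆), (μ∅), (μ=) (domain closed under finite unions)
by a total preorder: μ(X) is the set of minimal elements of X with respect to the strict
part of the preorder, and the structure is 𝒴-smooth. -/
theorem ranked_smooth_representation {α : Type*} (𝒴 : Set (Set α)) (μ : Set α → Set α)
    (hUnion : ∀ A ∈ 𝒴, ∀ B ∈ 𝒴, A ∪ B ∈ 𝒴)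
    (hSub : ∀ X ∈ 𝒴, μ X ⊆ X)
    (hEmpty : ∀ X ∈ 𝒴, μ X = ∅ → X = ∅)
    (hEq : ∀ X ∈ 𝒴, ∀ Y ∈ 𝒴, X ⊆ Y → (X ∩ μ Y).Nonempty → μ X = μ Y ∩ X) :
    ∃ S : α → α → Prop,
      (∀ x y, S x y ∨ S y x) ∧
      (∀ x, S x x) ∧
      (∀ x y z, S x y → S y z → S x z) ∧
      (∀ X ∈ 𝒴, μ X = {x | x ∈ X ∧ ¬ ∃ y ∈ X, S y x ∧ ¬ S x y}) ∧
      (∀ X ∈ 𝒴, ∀ x ∈ X \ μ X, ∃ y ∈ μ X, S y x ∧ ¬ S x y) := by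
  have hSup : SupClosed 𝒴 := fun A hA B hB => hUnion A hA B hB
  exact ⟨rankLE 𝒴 μ, rankLE_total hSup hSub hEmpty hEq, rankLE_refl hSub,
    rankLE_trans hSup hSub hEmpty hEq,
    fun X hX => mu_eq_setOf_rankLE_minimal hSup hSub hEmpty hEq hX,
    fun X hX x hx => exists_rankLT_of_mem_diff_mu hSup hSub hEmpty hEq hX hx⟩
end
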